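/- arXiv:0909.1409 — 3 statements merged into one kernel-verified Lean document; each statement's English description precedes it below -/
import Mathlib

section
/- Let ν be a Lévy measure on ℝ^d (a measure with ν({0}) = 0 and ∫ (|x|² ∧ 1) ν(dx) < ∞), let α be a real number, and define a measure ν̃ by ν̃(B) = ∫_0^1 ν(s^{-1}B) s^{-α-1} ds. Then for the twice-iterated map, (B ↦ ∫_0^1 ν̃(s^{-1}B) s^{-α-1} ds) equals B ↦ ∫_0^1 ν(u^{-1}B) u^{-α-1} log(u^{-1}) du. -/
open MeasureTheory
open scoped ENNReal Pointwise

/-!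
With `G u = ν (u⁻¹ • B) * u ^ (-α - 1)`, the left-hand side is `∫₀¹ ∫₀¹ G (s * t) dt ds`.
The substitution `u = s * t` turns the inner integral into `s⁻¹ ∫₀ˢ G u du`, and Tonelli gives
`∫₀¹ G u (∫ᵤ¹ s⁻¹ ds) du = ∫₀¹ G u log u⁻¹ du`. Tonelli needs `c ↦ ν (c⁻¹ • B)` to be measurable,
which holds because a Lévy measure is s-finite: it is the finite measure with density
`min (‖x‖ ^ 2) 1` with respect to `ν`, reweighted by the reciprocal density, finite off the
`ν`-null set `{0}`.
-/

theorem sFinite_of_lintegral_ne_top {α : Type*} [MeasurableSpace α] {μ : Measure α}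
    {f : α → ℝ≥0∞} (hf : AEMeasurable f μ) (hf_ne_zero : ∀ᵐ x ∂μ, f x ≠ 0)
    (hf_int : ∫⁻ x, f x ∂μ ≠ ∞) : SFinite μ := by
  have : IsFiniteMeasure (μ.withDensity f) := isFiniteMeasure_withDensity hf_int
  rw [← withDensity_inv_same₀ hf hf_ne_zero ((ae_lt_top' hf hf_int).mono fun _ h ↦ h.ne)]
  infer_instance

theorem sFinite_of_levy {E : Type*} [NormedAddCommGroup E] [MeasurableSpace E]
    [OpensMeasurableSpace E] {ν : Measure E} (hν0 : ν {0} = 0)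
    (hν : ∫⁻ x, ENNReal.ofReal (min (‖x‖ ^ 2) 1) ∂ν ≠ ⊤) : SFinite ν := by
  refine sFinite_of_lintegral_ne_top (by fun_prop) ?_ hν
  refine (measure_eq_zero_iff_ae_notMem.1 hν0).mono fun x hx ↦ ?_
  have : 0 < ‖x‖ := norm_pos_iff.2 hx
  positivity

theorem measurable_measure_preimage_smul {M α : Type*} [MeasurableSpace M] [MeasurableSpace α]
    [SMul M α] [MeasurableSMul₂ M α] (μ : Measure α) [SFinite μ] {B : Set α}
    (hB : MeasurableSet B) : Measurable fun c : M ↦ μ ((c • ·) ⁻¹' B) :=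
  measurable_measure_prodMk_left (measurable_smul hB)

theorem setLIntegral_comp_const_mul {s : ℝ} (hs : s ≠ 0) {F : ℝ → ℝ≥0∞} {A : Set ℝ}
    (hA : MeasurableSet A) :
    ∫⁻ t in (s * ·) ⁻¹' A, F (s * t) = ENNReal.ofReal |s⁻¹| * ∫⁻ u in A, F u := by
  have he : MeasurableEmbedding (s * ·) := (Homeomorph.mulLeft₀ s hs).measurableEmbedding
  rw [← he.lintegral_map, ← Measure.restrict_map he.measurable hA, Real.map_volume_mul_left hs,
    Measure.restrict_smul, lintegral_smul_measure, smul_eq_mul]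

theorem lintegral_Ioo_ofReal_inv {a b : ℝ} (ha : 0 < a) (hab : a ≤ b) :
    ∫⁻ s in Set.Ioo a b, ENNReal.ofReal s⁻¹ = ENNReal.ofReal (Real.log (b / a)) := by
  have hint : IntegrableOn (fun s : ℝ ↦ s⁻¹) (Set.Ioc a b) :=
    (intervalIntegrable_iff_integrableOn_Ioc_of_le hab).1 <|
      intervalIntegral.intervalIntegrable_inv
        (fun x hx ↦ (ha.trans_le (Set.uIcc_of_le hab ▸ hx).1).ne') continuousOn_id
  rw [← integral_inv_of_pos ha (ha.trans_le hab), intervalIntegral.integral_of_le hab,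
    integral_Ioc_eq_integral_Ioo, ofReal_integral_eq_lintegral_ofReal
      (hint.mono_set Set.Ioo_subset_Ioc_self)]
  filter_upwards [ae_restrict_mem measurableSet_Ioo] with s hs
  exact inv_nonneg.2 (ha.trans hs.1).le

theorem lintegral_Ioo_comp_mul_of_pos {s : ℝ} (hs : 0 < s) (F : ℝ → ℝ≥0∞) :
    ∫⁻ t in Set.Ioo 0 1, F (s * t) = ENNReal.ofReal s⁻¹ * ∫⁻ u in Set.Ioo 0 s, F u := by
  have hpre : (s * ·) ⁻¹' Set.Ioo 0 s = Set.Ioo 0 1 := by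
    rw [Set.preimage_const_mul_Ioo₀ _ _ hs, zero_div, div_self hs.ne']
  rw [← hpre, setLIntegral_comp_const_mul hs.ne' measurableSet_Ioo, abs_of_pos (inv_pos.2 hs)]

theorem lintegral_Ioo_lintegral_Ioo_comp_mul {G : ℝ → ℝ≥0∞} (hG : Measurable G) :
    ∫⁻ s in Set.Ioo 0 1, ∫⁻ t in Set.Ioo 0 1, G (s * t)
      = ∫⁻ u in Set.Ioo 0 1, G u * ENNReal.ofReal (Real.log u⁻¹) := by
  set K : ℝ × ℝ → ℝ≥0∞ :=
    {p | p.2 < p.1}.indicator fun p ↦ ENNReal.ofReal p.1⁻¹ * G p.2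
  have hKm : Measurable K :=
    (measurable_fst.inv.ennreal_ofReal.mul (hG.comp measurable_snd)).indicator
      (measurableSet_lt measurable_snd measurable_fst)
  have h_inner : ∀ s ∈ Set.Ioo (0 : ℝ) 1,
      ∫⁻ t in Set.Ioo 0 1, G (s * t) = ∫⁻ u in Set.Ioo 0 1, K (s, u) := by
    intro s hs
    change _ = ∫⁻ u in Set.Ioo 0 1, (Set.Iio s).indicator (fun u ↦ ENNReal.ofReal s⁻¹ * G u) u
    rw [lintegral_indicator measurableSet_Iio, Measure.restrict_restrict measurableSet_Iio,
      Set.Iio_inter_Ioo, min_eq_left hs.2.le, lintegral_const_mul _ hG,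
      lintegral_Ioo_comp_mul_of_pos hs.1]
  have h_outer : ∀ u ∈ Set.Ioo (0 : ℝ) 1,
      ∫⁻ s in Set.Ioo 0 1, K (s, u) = G u * ENNReal.ofReal (Real.log u⁻¹) := by
    intro u hu
    change ∫⁻ s in Set.Ioo 0 1, (Set.Ioi u).indicator (fun s ↦ ENNReal.ofReal s⁻¹ * G u) s = _
    rw [lintegral_indicator measurableSet_Ioi, Measure.restrict_restrict measurableSet_Ioi,
      Set.Ioi_inter_Ioo, max_eq_left hu.1.le, lintegral_mul_const _ measurable_inv.ennreal_ofReal,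
      lintegral_Ioo_ofReal_inv hu.1 hu.2.le, one_div, mul_comm]
  calc ∫⁻ s in Set.Ioo 0 1, ∫⁻ t in Set.Ioo 0 1, G (s * t)
      = ∫⁻ s in Set.Ioo 0 1, ∫⁻ u in Set.Ioo 0 1, K (s, u) :=
        setLIntegral_congr_fun measurableSet_Ioo h_inner
    _ = ∫⁻ u in Set.Ioo 0 1, ∫⁻ s in Set.Ioo 0 1, K (s, u) :=
        lintegral_lintegral_swap hKm.aemeasurable
    _ = ∫⁻ u in Set.Ioo 0 1, G u * ENNReal.ofReal (Real.log u⁻¹) :=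
        setLIntegral_congr_fun measurableSet_Ioo h_outer

/-- If ν is a Lévy measure on ℝ^d and ν̃(B) = ∫_0^1 ν(s⁻¹B) s^{-α-1} ds, then the
twice-iterated map satisfies
∫_0^1 ν̃(s⁻¹B) s^{-α-1} ds = ∫_0^1 ν(u⁻¹B) u^{-α-1} log(u⁻¹) du. -/
theorem stmt_5 {d : ℕ} (α : ℝ) (ν : Measure (Fin d → ℝ))
    (hν0 : ν {0} = 0)
    (hν : ∫⁻ x, ENNReal.ofReal (min (‖x‖ ^ 2) 1) ∂ν ≠ ⊤)
    (νt : Set (Fin d → ℝ) → ℝ≥0∞)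
    (hνt : ∀ B : Set (Fin d → ℝ),
      νt B = ∫⁻ s in Set.Ioo (0:ℝ) 1, ν (s⁻¹ • B) * ENNReal.ofReal (s ^ (-α - 1 : ℝ)))
    (B : Set (Fin d → ℝ)) (hB : MeasurableSet B) :
    ∫⁻ s in Set.Ioo (0:ℝ) 1, νt (s⁻¹ • B) * ENNReal.ofReal (s ^ (-α - 1 : ℝ))
      = ∫⁻ u in Set.Ioo (0:ℝ) 1,
          ν (u⁻¹ • B) * ENNReal.ofReal (u ^ (-α - 1 : ℝ) * Real.log u⁻¹) := by
  have := sFinite_of_levy hν0 hν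
  set G : ℝ → ℝ≥0∞ := fun u ↦ ν ((u • ·) ⁻¹' B) * ENNReal.ofReal (u ^ (-α - 1 : ℝ))
  have hG : Measurable G :=
    (measurable_measure_preimage_smul ν hB).mul (measurable_id.pow_const _).ennreal_ofReal
  have h_left : ∀ s ∈ Set.Ioo (0 : ℝ) 1, νt (s⁻¹ • B) * ENNReal.ofReal (s ^ (-α - 1 : ℝ))
      = ∫⁻ t in Set.Ioo 0 1, G (s * t) := by
    intro s hs
    rw [hνt, ← lintegral_mul_const' _ _ ENNReal.ofReal_ne_top]
    refine setLIntegral_congr_fun measurableSet_Ioo fun t ht ↦ ?_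
    rw [smul_smul, ← mul_inv, mul_comm t, ← Set.preimage_smul₀ (mul_pos hs.1 ht.1).ne']
    simp only [G, Real.mul_rpow hs.1.le ht.1.le, ENNReal.ofReal_mul (Real.rpow_nonneg hs.1.le _)]
    ring
  have h_right : ∀ u ∈ Set.Ioo (0 : ℝ) 1,
      ν (u⁻¹ • B) * ENNReal.ofReal (u ^ (-α - 1 : ℝ) * Real.log u⁻¹)
        = G u * ENNReal.ofReal (Real.log u⁻¹) := by
    intro u hu
    simp only [G, Set.preimage_smul₀ hu.1.ne', ENNReal.ofReal_mul (Real.rpow_nonneg hu.1.le _),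
      mul_assoc]
  rw [setLIntegral_congr_fun measurableSet_Ioo h_left,
    setLIntegral_congr_fun measurableSet_Ioo h_right]
  exact lintegral_Ioo_lintegral_Ioo_comp_mul hG
end

section
/- Let α ∈ ℝ, and let ν_ξ be a measure on (0,∞). Define ℓ̃(u) = ∫_u^∞ r^α ν_ξ(dr) (assumed finite for all u > 0). Then for every Borel set B ⊆ (0,∞), ∫_0^1 s^{-α-1} (∫_0^∞ 1_B(sr) ν_ξ(dr)) ds = ∫_0^∞ 1_B(u) u^{-α-1} ℓ̃(u) du. -/
open MeasureTheory Set Function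
open scoped ENNReal

/-!
Substituting `u = s r` in the `s`-integral turns `∫_0^1 s^{-α-1} 1_B(s r) ds` into
`r^α ∫_0^r 1_B(u) u^{-α-1} du`; exchanging the `r`- and `u`-integrals over the triangle
`0 < u < r` then produces `ℓ(u) = ∫_{r > u} r^α dν`. Both exchanges are Tonelli, which needs `ν`
to be s-finite on `(0, ∞)`: finiteness of `ℓ` makes `r^α dν` σ-finite there, and `ν` is absolutely
continuous with respect to it.
-/

theorem sigmaFinite_of_measure_Iic_Ioi_ne_top {ρ : Measure ℝ} (h0 : ρ (Iic 0) ≠ ∞)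
    (hpos : ∀ u > 0, ρ (Ioi u) ≠ ∞) : SigmaFinite ρ := by
  refine Measure.sigmaFinite_of_countable
    (S := insert (Iic 0) (range fun n : ℕ ↦ Ioi (1 / (n + 1 : ℝ))))
    ((countable_range _).insert _) ?_ ?_
  · rintro s (rfl | ⟨n, rfl⟩)
    · exact h0.lt_top
    · exact (hpos _ Nat.one_div_pos_of_nat).lt_top
  · refine eq_univ_of_forall fun x ↦ ?_
    rcases le_or_gt x 0 with hx | hx
    · exact mem_sUnion_of_mem (mem_Iic.2 hx) (mem_insert _ _)
    · obtain ⟨n, hn⟩ := exists_nat_one_div_lt hx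
      exact mem_sUnion_of_mem (mem_Ioi.2 hn) (mem_insert_of_mem _ ⟨n, rfl⟩)

theorem sFinite_restrict_Ioi_of_setLIntegral_rpow_ne_top {ν : Measure ℝ} {α : ℝ}
    (h : ∀ u > 0, ∫⁻ r in Ioi u, ENNReal.ofReal (r ^ α) ∂ν ≠ ∞) :
    SFinite (ν.restrict (Ioi 0)) := by
  have hw : Measurable fun r : ℝ ↦ ENNReal.ofReal (r ^ α) := by fun_prop
  have : SigmaFinite ((ν.restrict (Ioi 0)).withDensity fun r ↦ ENNReal.ofReal (r ^ α)) := by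
    refine sigmaFinite_of_measure_Iic_Ioi_ne_top ?_ fun u hu ↦ ?_
    · rw [withDensity_apply _ measurableSet_Iic, Measure.restrict_restrict measurableSet_Iic,
        Iic_inter_Ioi, Ioc_self, Measure.restrict_empty, lintegral_zero_measure]
      exact ENNReal.zero_ne_top
    · rw [withDensity_apply _ measurableSet_Ioi, Measure.restrict_restrict measurableSet_Ioi,
        Ioi_inter_Ioi, max_eq_left hu.le]
      exact h u hu
  refine sFinite_of_absolutelyContinuous (withDensity_absolutelyContinuous' hw.aemeasurable ?_)
  filter_upwards [ae_restrict_mem measurableSet_Ioi] with r hr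
  exact ENNReal.ofReal_ne_zero_iff.2 (Real.rpow_pos_of_pos hr α)

theorem lintegral_setLIntegral_Iio_swap {α : Type*} [MeasurableSpace α] [TopologicalSpace α]
    [LinearOrder α] [OrderClosedTopology α] [SecondCountableTopology α] [OpensMeasurableSpace α]
    {μ ν : Measure α} [SFinite μ] [SFinite ν] {f : α → α → ℝ≥0∞} (hf : Measurable (uncurry f)) :
    ∫⁻ r, ∫⁻ u in Iio r, f u r ∂μ ∂ν = ∫⁻ u, ∫⁻ r in Ioi u, f u r ∂ν ∂μ := by
  set T : Set (α × α) := {p | p.1 < p.2}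
  have hT : MeasurableSet T := measurableSet_lt measurable_fst measurable_snd
  have hIio : ∀ u r, (Iio r).indicator (f · r) u = T.indicator (uncurry f) (u, r) := by
    intro u r
    by_cases h : u < r <;> simp [T, indicator, h]
  have hIoi : ∀ u r, (Ioi u).indicator (f u) r = T.indicator (uncurry f) (u, r) := by
    intro u r
    by_cases h : u < r <;> simp [T, indicator, h]
  simp_rw [← lintegral_indicator measurableSet_Iio, ← lintegral_indicator measurableSet_Ioi,
    hIio, hIoi]
  exact lintegral_lintegral_swap ((hf.indicator hT).comp measurable_swap).aemeasurable

theorem setLIntegral_preimage_mul_right (g : ℝ → ℝ≥0∞) {r : ℝ} (hr : r ≠ 0) (s : Set ℝ) :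
    ∫⁻ x in (· * r) ⁻¹' s, g (x * r) = ENNReal.ofReal |r⁻¹| * ∫⁻ u in s, g u := by
  have he : MeasurableEmbedding (· * r) := (Homeomorph.mulRight₀ r hr).measurableEmbedding
  rw [← he.lintegral_map, ← he.restrict_map, Real.map_volume_mul_right hr, Measure.restrict_smul,
    lintegral_smul_measure, smul_eq_mul]

theorem setLIntegral_Ioo_rpow_mul_comp_mul (φ : ℝ → ℝ≥0∞) (α : ℝ) {r : ℝ} (hr : 0 < r) :
    ∫⁻ s in Ioo 0 1, ENNReal.ofReal (s ^ (-α - 1)) * φ (s * r)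
      = ∫⁻ u in Ioo 0 r, φ u * ENNReal.ofReal (u ^ (-α - 1)) * ENNReal.ofReal (r ^ α) := by
  set g : ℝ → ℝ≥0∞ := fun u ↦ φ u * ENNReal.ofReal (u ^ (-α - 1)) * ENNReal.ofReal (r ^ (α + 1))
  have hg : ∀ s ∈ Ioo (0 : ℝ) 1, ENNReal.ofReal (s ^ (-α - 1)) * φ (s * r) = g (s * r) := by
    intro s hs
    have hsr : (s * r) ^ (-α - 1) * r ^ (α + 1) = s ^ (-α - 1) := by
      rw [Real.mul_rpow hs.1.le hr.le, mul_assoc, ← Real.rpow_add hr]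
      norm_num
    rw [← hsr, ENNReal.ofReal_mul (Real.rpow_nonneg (mul_pos hs.1 hr).le _)]
    ring
  have hpre : (· * r) ⁻¹' Ioo 0 r = Ioo (0 : ℝ) 1 := by
    rw [preimage_mul_const_Ioo₀ _ _ hr, zero_div, div_self hr.ne']
  have hr_pow : ENNReal.ofReal r⁻¹ * ENNReal.ofReal (r ^ (α + 1)) = ENNReal.ofReal (r ^ α) := by
    rw [← ENNReal.ofReal_mul (by positivity), Real.rpow_add_one hr.ne']
    field_simp
  rw [setLIntegral_congr_fun measurableSet_Ioo hg, ← hpre, setLIntegral_preimage_mul_right g hr.ne',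
    abs_of_pos (inv_pos.2 hr), ← lintegral_const_mul' _ _ ENNReal.ofReal_ne_top]
  refine lintegral_congr fun u ↦ ?_
  rw [mul_comm, mul_assoc, mul_comm (ENNReal.ofReal _), hr_pow]

theorem setLIntegral_rpow_mul_lintegral_comp_mul (α : ℝ) {ν : Measure ℝ}
    [SFinite (ν.restrict (Ioi 0))] {φ : ℝ → ℝ≥0∞} (hφ : Measurable φ) :
    ∫⁻ s in Ioo 0 1, ENNReal.ofReal (s ^ (-α - 1)) * ∫⁻ r in Ioi 0, φ (s * r) ∂ν
      = ∫⁻ u in Ioi 0, φ u * ENNReal.ofReal (u ^ (-α - 1)) *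
          ∫⁻ r in Ioi u, ENNReal.ofReal (r ^ α) ∂ν := by
  have hw : Measurable fun r : ℝ ↦ ENNReal.ofReal (r ^ α) := by fun_prop
  have hIoo : ∀ r : ℝ, (volume.restrict (Ioi 0)).restrict (Iio r) = volume.restrict (Ioo 0 r) := by
    intro r
    rw [Measure.restrict_restrict measurableSet_Iio, Iio_inter_Ioi]
  have hIoi : ∀ u > (0 : ℝ), (ν.restrict (Ioi 0)).restrict (Ioi u) = ν.restrict (Ioi u) := by
    intro u hu
    rw [Measure.restrict_restrict measurableSet_Ioi, Ioi_inter_Ioi, max_eq_left hu.le]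
  calc ∫⁻ s in Ioo 0 1, ENNReal.ofReal (s ^ (-α - 1)) * ∫⁻ r in Ioi 0, φ (s * r) ∂ν
      = ∫⁻ s in Ioo 0 1, ∫⁻ r in Ioi 0, ENNReal.ofReal (s ^ (-α - 1)) * φ (s * r) ∂ν := by
        simp_rw [lintegral_const_mul' _ _ ENNReal.ofReal_ne_top]
    _ = ∫⁻ r in Ioi 0, (∫⁻ s in Ioo 0 1, ENNReal.ofReal (s ^ (-α - 1)) * φ (s * r)) ∂ν :=
        lintegral_lintegral_swap (by fun_prop)
    _ = ∫⁻ r in Ioi 0, (∫⁻ u in Ioo 0 r,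
          φ u * ENNReal.ofReal (u ^ (-α - 1)) * ENNReal.ofReal (r ^ α)) ∂ν :=
        setLIntegral_congr_fun measurableSet_Ioi fun r hr ↦
          setLIntegral_Ioo_rpow_mul_comp_mul φ α hr
    _ = ∫⁻ u in Ioi 0, ∫⁻ r in Ioi u,
          φ u * ENNReal.ofReal (u ^ (-α - 1)) * ENNReal.ofReal (r ^ α) ∂ν := by
        simp_rw [← hIoo]
        rw [lintegral_setLIntegral_Iio_swap (by fun_prop)]
        exact setLIntegral_congr_fun measurableSet_Ioi fun u hu ↦ by rw [hIoi u hu]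
    _ = ∫⁻ u in Ioi 0, φ u * ENNReal.ofReal (u ^ (-α - 1)) *
          ∫⁻ r in Ioi u, ENNReal.ofReal (r ^ α) ∂ν := by
        simp_rw [lintegral_const_mul _ hw]

theorem stmt_11_general (α : ℝ) (ν : Measure ℝ)
    (ℓ : ℝ → ℝ≥0∞)
    (hℓ : ∀ u : ℝ, 0 < u → ℓ u = ∫⁻ r in Set.Ioi u, ENNReal.ofReal (r ^ α) ∂ν)
    (hℓfin : ∀ u : ℝ, 0 < u → ℓ u ≠ ⊤)
    (B : Set ℝ) (hB : MeasurableSet B) :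
    ∫⁻ s in Set.Ioo (0:ℝ) 1,
        ENNReal.ofReal (s ^ (-α - 1 : ℝ)) *
          ∫⁻ r in Set.Ioi (0:ℝ), B.indicator (fun _ => (1 : ℝ≥0∞)) (s * r) ∂ν
      = ∫⁻ u in Set.Ioi (0:ℝ),
          B.indicator (fun _ => (1 : ℝ≥0∞)) u * ENNReal.ofReal (u ^ (-α - 1 : ℝ)) * ℓ u := by
  have : SFinite (ν.restrict (Ioi 0)) :=
    sFinite_restrict_Ioi_of_setLIntegral_rpow_ne_top fun u hu ↦ hℓ u hu ▸ hℓfin u hu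
  rw [setLIntegral_rpow_mul_lintegral_comp_mul α (measurable_const.indicator hB)]
  exact setLIntegral_congr_fun measurableSet_Ioi fun u hu ↦ by rw [hℓ u hu]

/-- For a measure ν_ξ on (0,∞) with ℓ̃(u) = ∫_u^∞ r^α ν_ξ(dr) finite, for every
Borel set B ⊆ (0,∞),
∫_0^1 s^{-α-1} (∫_0^∞ 1_B(sr) ν_ξ(dr)) ds = ∫_0^∞ 1_B(u) u^{-α-1} ℓ̃(u) du. -/
theorem stmt_11 (α : ℝ) (ν : Measure ℝ) (hν : ν (Set.Iic 0) = 0)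
    (ℓ : ℝ → ℝ≥0∞)
    (hℓ : ∀ u : ℝ, 0 < u → ℓ u = ∫⁻ r in Set.Ioi u, ENNReal.ofReal (r ^ α) ∂ν)
    (hℓfin : ∀ u : ℝ, 0 < u → ℓ u ≠ ⊤)
    (B : Set ℝ) (hB : MeasurableSet B) (hB' : B ⊆ Set.Ioi 0) :
    ∫⁻ s in Set.Ioo (0:ℝ) 1,
        ENNReal.ofReal (s ^ (-α - 1 : ℝ)) *
          ∫⁻ r in Set.Ioi (0:ℝ), B.indicator (fun _ => (1 : ℝ≥0∞)) (s * r) ∂ν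
      = ∫⁻ u in Set.Ioi (0:ℝ),
          B.indicator (fun _ => (1 : ℝ≥0∞)) u * ENNReal.ofReal (u ^ (-α - 1 : ℝ)) * ℓ u :=
  stmt_11_general α ν ℓ hℓ hℓfin B hB
end

section
/- Let 1 < α < 2 and let ν be a Lévy measure on ℝ^d with ∫_{|x|>1} |x|^α ν(dx) < ∞ and ∫_{|x|≤1}|x|³ν(dx) < ∞. Define ν̃(B) = ∫_0^1 ν(s^{-1}B) s^{-α-1} ds. Then ∫_{ℝ^d} |x|³/(1+|x|²) ν̃(dx) < ∞; in particular ∫_{|x|>1} |x| ν̃(dx) < ∞. -/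
/-!
Write `g r = r³ / (1 + r²)`. The defining formula exhibits `ν̃` as the image of
`(s^(-α-1) ds on (0, 1)) ⊗ ν` under `(s, x) ↦ s • x`, so by Tonelli (for which the Lévy condition
makes `ν` σ-finite) `∫ g ‖y‖ dν̃(y) = ∫ K ‖x‖ dν(x)` with `K t = ∫₀¹ s^(-α-1) g (s t) ds`.
Since `g r ≤ min (r³, r)`, `K t ≤ t³ / (3 - α)`, and splitting the `s`-integral at `1 / t` gives
`K t ≤ t^α (1 / (3 - α) + 1 / (α - 1))`; the first bound is integrated over the unit ball, the
second outside it. The tail estimate follows from `r ≤ 2 g r` for `r ≥ 1`.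
-/

open MeasureTheory Set ENNReal
open scoped Pointwise

theorem sigmaFinite_of_lintegral_ne_top {X : Type*} [MeasurableSpace X] {μ : Measure X}
    {f : X → ℝ≥0∞} (hf : Measurable f) (hf0 : ∀ᵐ x ∂μ, f x ≠ 0) (hfi : ∫⁻ x, f x ∂μ ≠ ∞) :
    SigmaFinite μ := by
  have : IsFiniteMeasure (μ.withDensity f) := isFiniteMeasure_withDensity hfi
  have hf_inv : ∀ᵐ x ∂μ.withDensity f, (f x)⁻¹ ≠ ∞ :=
    withDensity_absolutelyContinuous μ f (hf0.mono fun _ hx => inv_ne_top.2 hx)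
  rw [← withDensity_inv_same hf hf0 ((ae_lt_top hf hfi).mono fun _ hx => hx.ne)]
  exact SigmaFinite.withDensity_of_ne_top hf_inv

theorem sigmaFinite_of_levy {E : Type*} [NormedAddCommGroup E] [MeasurableSpace E]
    [OpensMeasurableSpace E] {ν : Measure E} (hν0 : ν {0} = 0)
    (hν : ∫⁻ x, ENNReal.ofReal (min (‖x‖ ^ 2) 1) ∂ν ≠ ⊤) : SigmaFinite ν := by
  refine sigmaFinite_of_lintegral_ne_top (by fun_prop) ?_ hν
  have hne : ∀ᵐ x ∂ν, x ≠ 0 := by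
    rw [ae_iff]
    simpa using hν0
  filter_upwards [hne] with x hx
  simpa [ENNReal.ofReal_eq_zero, not_le] using norm_pos_iff.2 hx

theorem lintegral_eq_lintegral_lintegral_smul {E : Type*} [AddCommGroup E] [Module ℝ E]
    [MeasurableSpace E] [MeasurableSMul₂ ℝ E] {ν νt : Measure E} [SFinite ν]
    {ρ : ℝ → ℝ≥0∞} (hρ : Measurable ρ) {I : Set ℝ}
    (hνt : ∀ B, MeasurableSet B → νt B = ∫⁻ s in I, ν (s⁻¹ • B) * ρ s)
    {f : E → ℝ≥0∞} (hf : Measurable f) :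
    ∫⁻ x, f x ∂νt = ∫⁻ x, (∫⁻ s in I, ρ s * f (s • x)) ∂ν := by
  have hT : Measurable fun p : ℝ × E => p.1 • p.2 := measurable_smul
  set μ := (volume.restrict I).withDensity ρ
  have hmap : νt = (μ.prod ν).map fun p => p.1 • p.2 := by
    ext B hB
    rw [hνt B hB, Measure.map_apply hT hB, Measure.prod_apply (hT hB),
      lintegral_withDensity_eq_lintegral_mul _ hρ (measurable_measure_prodMk_left (hT hB))]
    -- `s⁻¹ • B` is junk at `s = 0`, a Lebesgue-null point
    refine lintegral_congr_ae (ae_restrict_of_ae ?_)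
    filter_upwards [Measure.ae_ne volume 0] with s hs
    rw [Pi.mul_apply, mul_comm, ← preimage_smul₀ hs]
    rfl
  rw [hmap, lintegral_map hf hT,
    lintegral_prod_symm (fun p : ℝ × E => f (p.1 • p.2)) (hf.comp hT).aemeasurable]
  exact lintegral_congr fun x =>
    lintegral_withDensity_eq_lintegral_mul _ hρ (hf.comp (measurable_id.smul_const x))

theorem lintegral_Ioc_zero_rpow {q b : ℝ} (hq : -1 < q) (hb : 0 ≤ b) :
    ∫⁻ s in Ioc 0 b, ENNReal.ofReal (s ^ q) = ENNReal.ofReal (b ^ (q + 1) / (q + 1)) := by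
  have hint : IntegrableOn (fun s : ℝ => s ^ q) (Ioc 0 b) :=
    (intervalIntegrable_iff_integrableOn_Ioc_of_le hb).1
      (intervalIntegral.intervalIntegrable_rpow' hq)
  rw [← ofReal_integral_eq_lintegral_ofReal hint
      ((ae_restrict_mem measurableSet_Ioc).mono fun s hs => Real.rpow_nonneg hs.1.le q),
    ← intervalIntegral.integral_of_le hb, integral_rpow (Or.inl hq),
    Real.zero_rpow (by linarith), sub_zero]

theorem lintegral_Ioi_rpow {q c : ℝ} (hq : q < -1) (hc : 0 < c) :
    ∫⁻ s in Ioi c, ENNReal.ofReal (s ^ q) = ENNReal.ofReal (-c ^ (q + 1) / (q + 1)) := by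
  rw [← ofReal_integral_eq_lintegral_ofReal (integrableOn_Ioi_rpow_of_lt hq hc)
      ((ae_restrict_mem measurableSet_Ioi).mono fun s hs => Real.rpow_nonneg (hc.trans hs).le q),
    integral_Ioi_rpow_of_lt hq hc]

theorem cube_div_one_add_sq_le_cube {r : ℝ} (hr : 0 ≤ r) : r ^ 3 / (1 + r ^ 2) ≤ r ^ 3 :=
  div_le_self (by positivity) (le_add_of_nonneg_right (sq_nonneg r))

theorem cube_div_one_add_sq_le_self {r : ℝ} (hr : 0 ≤ r) : r ^ 3 / (1 + r ^ 2) ≤ r := by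
  rw [div_le_iff₀ (by positivity)]
  nlinarith

theorem le_two_mul_cube_div_one_add_sq {r : ℝ} (hr : 1 ≤ r) : r ≤ 2 * (r ^ 3 / (1 + r ^ 2)) := by
  rw [← mul_div_assoc, le_div_iff₀ (by positivity)]
  nlinarith [mul_nonneg (by linarith : (0:ℝ) ≤ r) (by nlinarith : (0:ℝ) ≤ r ^ 2 - 1)]

theorem setLIntegral_ne_top_of_le_mul {X : Type*} [MeasurableSpace X] {μ : Measure X}
    {S : Set X} (hS : MeasurableSet S) {f g : X → ℝ≥0∞} {c : ℝ≥0∞} (hfg : ∀ x ∈ S, f x ≤ g x * c)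
    (hc : c ≠ ∞) (hg : ∫⁻ x in S, g x ∂μ ≠ ∞) : ∫⁻ x in S, f x ∂μ ≠ ∞ :=
  ne_top_of_le_ne_top (mul_ne_top hg hc)
    ((setLIntegral_mono' hS hfg).trans_eq (lintegral_mul_const' _ _ hc))

section Kernel

variable {α t : ℝ}

theorem lintegral_Ioc_rpow_mul_cube_div_le (hα : α < 3) (ht : 0 ≤ t) {b : ℝ} (hb : 0 ≤ b) :
    ∫⁻ s in Ioc 0 b, ENNReal.ofReal (s ^ (-α - 1)) *
        ENNReal.ofReal ((s * t) ^ 3 / (1 + (s * t) ^ 2))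
      ≤ ENNReal.ofReal (t ^ 3) * ENNReal.ofReal (b ^ (3 - α) / (3 - α)) := by
  calc _ ≤ ∫⁻ s in Ioc 0 b, ENNReal.ofReal (t ^ 3) * ENNReal.ofReal (s ^ (2 - α)) := by
        refine setLIntegral_mono' measurableSet_Ioc fun s hs => ?_
        have hs0 := hs.1
        rw [← ENNReal.ofReal_mul (by positivity), ← ENNReal.ofReal_mul (by positivity)]
        refine ENNReal.ofReal_le_ofReal ?_
        calc s ^ (-α - 1) * ((s * t) ^ 3 / (1 + (s * t) ^ 2))
            ≤ s ^ (-α - 1) * (s * t) ^ 3 :=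
              mul_le_mul_of_nonneg_left (cube_div_one_add_sq_le_cube (by positivity))
                (by positivity)
          _ = t ^ 3 * s ^ (2 - α) := by
              rw [show 2 - α = -α - 1 + (3 : ℕ) by push_cast; ring,
                Real.rpow_add_natCast hs0.ne']
              ring
    _ = _ := by
        rw [lintegral_const_mul' _ _ ofReal_ne_top, lintegral_Ioc_zero_rpow (by linarith) hb,
          show 2 - α + 1 = 3 - α by ring]

theorem lintegral_Ioi_rpow_mul_cube_div_le (hα : 1 < α) (ht : 0 ≤ t) {c : ℝ} (hc : 0 < c) :
    ∫⁻ s in Ioi c, ENNReal.ofReal (s ^ (-α - 1)) *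
        ENNReal.ofReal ((s * t) ^ 3 / (1 + (s * t) ^ 2))
      ≤ ENNReal.ofReal t * ENNReal.ofReal (c ^ (1 - α) / (α - 1)) := by
  calc _ ≤ ∫⁻ s in Ioi c, ENNReal.ofReal t * ENNReal.ofReal (s ^ (-α)) := by
        refine setLIntegral_mono' measurableSet_Ioi fun s hs => ?_
        have hs0 : 0 < s := hc.trans hs
        rw [← ENNReal.ofReal_mul (by positivity), ← ENNReal.ofReal_mul ht]
        refine ENNReal.ofReal_le_ofReal ?_
        calc s ^ (-α - 1) * ((s * t) ^ 3 / (1 + (s * t) ^ 2))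
            ≤ s ^ (-α - 1) * (s * t) :=
              mul_le_mul_of_nonneg_left (cube_div_one_add_sq_le_self (by positivity))
                (by positivity)
          _ = t * s ^ (-α) := by
              rw [Real.rpow_sub_one hs0.ne']
              field_simp
    _ = _ := by
        rw [lintegral_const_mul' _ _ ofReal_ne_top, lintegral_Ioi_rpow (by linarith) hc,
          show -α + 1 = 1 - α by ring, neg_div, ← div_neg, neg_sub]

theorem lintegral_Ioi_zero_rpow_mul_cube_div_le (hα1 : 1 < α) (hα3 : α < 3) (ht : 0 < t) :
    ∫⁻ s in Ioi 0, ENNReal.ofReal (s ^ (-α - 1)) *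
        ENNReal.ofReal ((s * t) ^ 3 / (1 + (s * t) ^ 2))
      ≤ ENNReal.ofReal (t ^ α) * ENNReal.ofReal (1 / (3 - α) + 1 / (α - 1)) := by
  have hinv : 0 < t⁻¹ := inv_pos.2 ht
  rw [← Ioc_union_Ioi_eq_Ioi hinv.le, lintegral_union measurableSet_Ioi Ioc_disjoint_Ioi_same]
  refine (add_le_add (lintegral_Ioc_rpow_mul_cube_div_le hα3 ht.le hinv.le)
    (lintegral_Ioi_rpow_mul_cube_div_le hα1 ht.le hinv)).trans_eq ?_
  have h3 : t ^ 3 * t⁻¹ ^ (3 - α) = t ^ α := by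
    rw [Real.inv_rpow ht.le, Real.rpow_sub ht, Real.rpow_ofNat]
    field_simp
  have h1 : t * t⁻¹ ^ (1 - α) = t ^ α := by
    rw [Real.inv_rpow ht.le, Real.rpow_sub ht, Real.rpow_one]
    field_simp
  have hα3_sub : 0 < 3 - α := by linarith
  have hα1_sub : 0 < α - 1 := by linarith
  rw [← ENNReal.ofReal_mul (by positivity), ← ENNReal.ofReal_mul ht.le,
    ← ENNReal.ofReal_add (by positivity) (by positivity), ← ENNReal.ofReal_mul (by positivity),
    mul_add]
  nth_rewrite 1 [← h3]
  rw [← h1]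
  congr 1
  ring

theorem lintegral_lintegral_Ioo_rpow_mul_cube_div_ne_top {E : Type*} [NormedAddCommGroup E]
    [MeasurableSpace E] [OpensMeasurableSpace E] {ν : Measure E} (hα1 : 1 < α) (hα3 : α < 3)
    (hνα : ∫⁻ x in {x : E | 1 < ‖x‖}, ENNReal.ofReal (‖x‖ ^ α) ∂ν ≠ ⊤)
    (hν3 : ∫⁻ x in {x : E | ‖x‖ ≤ 1}, ENNReal.ofReal (‖x‖ ^ 3) ∂ν ≠ ⊤) :
    ∫⁻ x, (∫⁻ s in Ioo 0 1, ENNReal.ofReal (s ^ (-α - 1)) *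
      ENNReal.ofReal ((s * ‖x‖) ^ 3 / (1 + (s * ‖x‖) ^ 2))) ∂ν ≠ ⊤ := by
  have hball : MeasurableSet {x : E | ‖x‖ ≤ 1} := measurableSet_le (by fun_prop) (by fun_prop)
  rw [← lintegral_add_compl _ hball, show {x : E | ‖x‖ ≤ 1}ᶜ = {x | 1 < ‖x‖} by ext; simp]
  refine add_ne_top.2 ⟨setLIntegral_ne_top_of_le_mul hball (fun x _ =>
      (lintegral_mono_set Ioo_subset_Ioc_self).trans
        (lintegral_Ioc_rpow_mul_cube_div_le hα3 (norm_nonneg x) zero_le_one)) ofReal_ne_top hν3,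
    setLIntegral_ne_top_of_le_mul (measurableSet_lt (by fun_prop) (by fun_prop)) (fun x hx =>
      (lintegral_mono_set Ioo_subset_Ioi_self).trans
        (lintegral_Ioi_zero_rpow_mul_cube_div_le hα1 hα3 (zero_lt_one.trans hx))) ofReal_ne_top hνα⟩

end Kernel

theorem setLIntegral_norm_ne_top_of_lintegral_cube_div_ne_top {E : Type*}
    [NormedAddCommGroup E] [MeasurableSpace E] [OpensMeasurableSpace E] {μ : Measure E}
    (h : ∫⁻ x, ENNReal.ofReal (‖x‖ ^ 3 / (1 + ‖x‖ ^ 2)) ∂μ ≠ ⊤) :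
    ∫⁻ x in {x : E | 1 < ‖x‖}, ENNReal.ofReal ‖x‖ ∂μ ≠ ⊤ := by
  refine ne_top_of_le_ne_top (mul_ne_top (ofNat_ne_top (n := 2)) h) ?_
  calc ∫⁻ x in {x : E | 1 < ‖x‖}, ENNReal.ofReal ‖x‖ ∂μ
      ≤ ∫⁻ x in {x : E | 1 < ‖x‖}, 2 * ENNReal.ofReal (‖x‖ ^ 3 / (1 + ‖x‖ ^ 2)) ∂μ := by
        refine setLIntegral_mono' (measurableSet_lt (by fun_prop) (by fun_prop)) fun x hx => ?_
        rw [← ofReal_ofNat 2, ← ENNReal.ofReal_mul zero_le_two]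
        exact ENNReal.ofReal_le_ofReal (le_two_mul_cube_div_one_add_sq (le_of_lt hx))
    _ ≤ ∫⁻ x, 2 * ENNReal.ofReal (‖x‖ ^ 3 / (1 + ‖x‖ ^ 2)) ∂μ := setLIntegral_le_lintegral _ _
    _ = 2 * ∫⁻ x, ENNReal.ofReal (‖x‖ ^ 3 / (1 + ‖x‖ ^ 2)) ∂μ :=
        lintegral_const_mul' _ _ ofNat_ne_top

/-- For 1 < α < 2 and a Lévy measure ν with ∫_{|x|>1}|x|^α ν(dx) < ∞ and
∫_{|x|≤1}|x|³ν(dx) < ∞, the measure ν̃(B) = ∫_0^1 ν(s⁻¹B) s^{-α-1} ds satisfies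
∫ |x|³/(1+|x|²) ν̃(dx) < ∞; in particular ∫_{|x|>1}|x| ν̃(dx) < ∞. -/
theorem stmt_13 {d : ℕ} (α : ℝ) (hα1 : 1 < α) (hα2 : α < 2)
    (ν : Measure (Fin d → ℝ)) (hν0 : ν {0} = 0)
    (hν : ∫⁻ x, ENNReal.ofReal (min (‖x‖ ^ 2) 1) ∂ν ≠ ⊤)
    (hνα : ∫⁻ x in {x : Fin d → ℝ | 1 < ‖x‖}, ENNReal.ofReal (‖x‖ ^ α) ∂ν ≠ ⊤)
    (hν3 : ∫⁻ x in {x : Fin d → ℝ | ‖x‖ ≤ 1}, ENNReal.ofReal (‖x‖ ^ 3) ∂ν ≠ ⊤)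
    (νt : Measure (Fin d → ℝ))
    (hνt : ∀ B : Set (Fin d → ℝ), MeasurableSet B →
      νt B = ∫⁻ s in Set.Ioo (0:ℝ) 1, ν (s⁻¹ • B) * ENNReal.ofReal (s ^ (-α - 1 : ℝ))) :
    (∫⁻ x, ENNReal.ofReal (‖x‖ ^ 3 / (1 + ‖x‖ ^ 2)) ∂νt ≠ ⊤) ∧
    (∫⁻ x in {x : Fin d → ℝ | 1 < ‖x‖}, ENNReal.ofReal ‖x‖ ∂νt ≠ ⊤) := by
  have := sigmaFinite_of_levy hν0 hν
  have hfinite : ∫⁻ x, ENNReal.ofReal (‖x‖ ^ 3 / (1 + ‖x‖ ^ 2)) ∂νt ≠ ⊤ := by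
    rw [lintegral_eq_lintegral_lintegral_smul (by fun_prop) hνt (by fun_prop)]
    refine ne_of_eq_of_ne (lintegral_congr fun x => setLIntegral_congr_fun measurableSet_Ioo
      fun s hs => ?_) (lintegral_lintegral_Ioo_rpow_mul_cube_div_ne_top hα1 (by linarith) hνα hν3)
    rw [norm_smul, Real.norm_of_nonneg hs.1.le]
  exact ⟨hfinite, setLIntegral_norm_ne_top_of_lintegral_cube_div_ne_top hfinite⟩
end
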